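/- For all ℓ, j with r ≤ ℓ < j ≤ n−1 one has, in H(χ): V_ℓ * V_j = V_j * V_ℓ = p^{n−j−1}(p−1) · V_ℓ. -/

import Mathlib

noncomputable section

/-- `y(t) = (1,0;t,1)` as an element of `GL₂(R)`. -/
def yG {R : Type*} [CommRing R] (t : R) : GL (Fin 2) R :=
  ⟨!![1, 0; t, 1], !![1, 0; -t, 1],
   by ext i j; fin_cases i <;> fin_cases j <;> simp [Matrix.mul_apply, Fin.sum_univ_two],
   by ext i j; fin_cases i <;> fin_cases j <;> simp [Matrix.mul_apply, Fin.sum_univ_two]⟩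

/-- Membership in the subgroup `B` of invertible upper triangular matrices. -/
def inB {R : Type*} [CommRing R] (g : GL (Fin 2) R) : Prop :=
  (g : Matrix (Fin 2) (Fin 2) R) 1 0 = 0

/-- `χ_B(b) = χ(d_b)`, where `d_b` is the `(2,2)`-entry of `b` (for `b ∈ B` this entry is a
unit; the function is extended by `0` elsewhere). -/
def chiB {R : Type*} [CommRing R] (χ : Rˣ →* ℂˣ) (g : GL (Fin 2) R) : ℂ :=
  letI := Classical.dec (IsUnit ((g : Matrix (Fin 2) (Fin 2) R) 1 1))
  if h : IsUnit ((g : Matrix (Fin 2) (Fin 2) R) 1 1) then (χ h.unit : ℂ) else 0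

/-- `|B|`. -/
def cardB (R : Type*) [CommRing R] : ℕ := Nat.card {g : GL (Fin 2) R // inB g}

/-- Convolution `(f*g)(x) = |B|⁻¹ Σ_{y∈G} f(y) g(y⁻¹x)`. -/
def conv {R : Type*} [CommRing R] [Fintype R] [DecidableEq R]
    (f g : GL (Fin 2) R → ℂ) : GL (Fin 2) R → ℂ :=
  fun x => (cardB R : ℂ)⁻¹ * ∑ y : GL (Fin 2) R, f y * g (y⁻¹ * x)

/-- Membership in the Hecke algebra `H(χ)` of `χ_B`-bi-equivariant functions on `G`. -/
def memH {R : Type*} [CommRing R] (χ : Rˣ →* ℂˣ) (f : GL (Fin 2) R → ℂ) : Prop :=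
  ∀ b x b' : GL (Fin 2) R, inB b → inB b' →
    f (b * x * b') = chiB χ b * chiB χ b' * f x

/-- `V_j`: the unique element of `H(χ)` vanishing off the double coset `B y_j B` with
`V_j(y_j) = 1`, where `y_j = (1,0;p^j,1)`. -/
def isV (p n : ℕ) (χ : (ZMod (p ^ n))ˣ →* ℂˣ) (j : ℕ)
    (V : GL (Fin 2) (ZMod (p ^ n)) → ℂ) : Prop :=
  memH χ V ∧
  (∀ x : GL (Fin 2) (ZMod (p ^ n)),
      (¬ ∃ b b' : GL (Fin 2) (ZMod (p ^ n)), inB b ∧ inB b' ∧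
          x = b * yG ((p : ZMod (p ^ n)) ^ j) * b') → V x = 0) ∧
  V (yG ((p : ZMod (p ^ n)) ^ j)) = 1

/-- `χ` has conductor `p^r`: trivial on units `≡ 1 (mod p^r)`, nontrivial on units
`≡ 1 (mod p^{r−1})`. -/
def hasConductor (p n r : ℕ) (χ : (ZMod (p ^ n))ˣ →* ℂˣ) : Prop :=
  (∀ u : (ZMod (p ^ n))ˣ, (p : ZMod (p ^ n)) ^ r ∣ ((u : ZMod (p ^ n)) - 1) → χ u = 1) ∧
  ∃ u : (ZMod (p ^ n))ˣ, (p : ZMod (p ^ n)) ^ (r - 1) ∣ ((u : ZMod (p ^ n)) - 1) ∧ χ u ≠ 1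

/-! For `m ≥ r ≥ 1` the function `V_m` is `g ↦ χ(g₁₁)` restricted to the cell
`C_m = {g | g₁₀ ∈ pᵐ (ℤ/pⁿ)ˣ} = B y_m B`. Because `χ` has conductor `p^r`, `g ↦ χ(g₁₁)` is
multiplicative on matrices with `p^r ∣ g₁₀`, so
`(V_a * V_b)(x) = χ(x₁₁) · #{y ∈ C_a | y⁻¹x ∈ C_b} / |B|`.
For `ℓ < j` one has `C_ℓ C_j ⊆ C_ℓ`, `C_j C_ℓ ⊆ C_ℓ` and `C_j⁻¹ = C_j`; hence for `a, b = ℓ, j` in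
either order the count is `|C_j|` if `x ∈ C_ℓ` and `0` otherwise. Finally
`|C_j| = |B| · #(pʲ (ℤ/pⁿ)ˣ) = |B| · φ(p^(n-j))`. -/

section Jacobson

variable {R : Type*} [CommRing R] {π : R}

lemma isUnit_add_mul_of_mem_jacobson (hπ : π ∈ (⊥ : Ideal R).jacobson) {u : R} (hu : IsUnit u)
    (t : R) : IsUnit (u + π * t) := by
  obtain ⟨v, rfl⟩ := hu
  convert v.isUnit.mul (Ideal.mem_jacobson_bot.mp hπ (↑v⁻¹ * t)) using 1
  linear_combination (-(π * t)) * v.mul_inv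

def powUnits (π : R) (m : ℕ) : Set R := Set.range fun u : Rˣ => π ^ m * u

lemma pow_dvd_of_mem_powUnits {m k : ℕ} (hk : k ≤ m) {c : R} (hc : c ∈ powUnits π m) :
    π ^ k ∣ c := by
  obtain ⟨u, rfl⟩ := hc
  exact (pow_dvd_pow π hk).mul_right _

lemma mul_mem_powUnits {m : ℕ} {a c : R} (ha : IsUnit a) (hc : c ∈ powUnits π m) :
    a * c ∈ powUnits π m := by
  obtain ⟨u, rfl⟩ := hc
  exact ⟨ha.unit * u, by simp only [Units.val_mul, IsUnit.unit_spec]; ring⟩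

lemma add_mem_powUnits (hπ : π ∈ (⊥ : Ideal R).jacobson) {m : ℕ} {c s : R}
    (hc : c ∈ powUnits π m) (hs : π ^ (m + 1) ∣ s) : c + s ∈ powUnits π m := by
  obtain ⟨u, rfl⟩ := hc
  obtain ⟨t, rfl⟩ := hs
  refine ⟨(isUnit_add_mul_of_mem_jacobson hπ u.isUnit t).unit, ?_⟩
  simp only [IsUnit.unit_spec]
  ring

lemma MonoidHom.eq_of_pow_dvd_sub {M : Type*} [CommMonoid M] {r : ℕ} {χ : Rˣ →* M}
    (hχ : ∀ u : Rˣ, π ^ r ∣ (u : R) - 1 → χ u = 1) {u v : Rˣ} (huv : π ^ r ∣ (u : R) - v) :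
    χ u = χ v := by
  have h : χ (u * v⁻¹) = 1 := hχ _ <| by
    convert huv.mul_right (↑v⁻¹ : R) using 1
    rw [Units.val_mul]
    linear_combination v.mul_inv
  calc χ u = χ (u * v⁻¹) * χ v := by rw [← map_mul, inv_mul_cancel_right]
    _ = χ v := by rw [h, one_mul]

end Jacobson

section GL2

variable {R : Type*} [CommRing R] {π : R}

lemma GL2.mul_apply (g h : GL (Fin 2) R) (i k : Fin 2) :
    (g * h).val i k = g.val i 0 * h.val 0 k + g.val i 1 * h.val 1 k := by
  simp [Matrix.mul_apply, Fin.sum_univ_two]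

lemma GL2.inv_apply_one_zero (g : GL (Fin 2) R) :
    g⁻¹.val 1 0 = -Ring.inverse g.val.det * g.val 1 0 := by
  rw [Matrix.coe_units_inv, Matrix.inv_def, Matrix.adjugate_fin_two]
  simp

lemma GL2.isUnit_diag_of_mem_jacobson (hπ : π ∈ (⊥ : Ideal R).jacobson) {g : GL (Fin 2) R}
    (hg : π ∣ g.val 1 0) : IsUnit (g.val 0 0) ∧ IsUnit (g.val 1 1) := by
  obtain ⟨t, ht⟩ := hg
  have had : IsUnit (g.val 0 0 * g.val 1 1) := by
    convert isUnit_add_mul_of_mem_jacobson hπ (Matrix.isUnits_det_units g) (g.val 0 1 * t) using 1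
    rw [Matrix.det_fin_two, ht]
    ring
  exact ⟨isUnit_of_mul_isUnit_left had, isUnit_of_mul_isUnit_right had⟩

lemma GL2.isUnit_diag_of_inB (hπ : π ∈ (⊥ : Ideal R).jacobson) {b : GL (Fin 2) R} (hb : inB b) :
    IsUnit (b.val 0 0) ∧ IsUnit (b.val 1 1) :=
  GL2.isUnit_diag_of_mem_jacobson hπ (hb ▸ dvd_zero π)

lemma yG_val (t : R) : (yG t).val = !![1, 0; t, 1] := rfl

lemma yG_mul_yG (s t : R) : yG s * yG t = yG (s + t) := by
  ext i k
  fin_cases i <;> fin_cases k <;> simp [yG, Matrix.mul_apply, Fin.sum_univ_two, add_comm]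

lemma yG_zero : yG (0 : R) = 1 := by
  ext i k
  fin_cases i <;> fin_cases k <;> simp [yG]

end GL2

section Cells

variable {R : Type*} [CommRing R] {π : R}

/-- For `m ≥ 1` this is the double coset `B y_m B`, see `mem_lowerCell_iff`. -/
def lowerCell (π : R) (m : ℕ) : Set (GL (Fin 2) R) := {g | g.val 1 0 ∈ powUnits π m}

lemma inv_mem_lowerCell {m : ℕ} {g : GL (Fin 2) R} (hg : g ∈ lowerCell π m) :
    g⁻¹ ∈ lowerCell π m := by
  have hdet : IsUnit (-Ring.inverse g.val.det) := (Matrix.isUnits_det_units g).ringInverse.neg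
  simpa only [lowerCell, Set.mem_ofPred_eq, GL2.inv_apply_one_zero] using mul_mem_powUnits hdet hg

lemma GL2.isUnit_diag_of_mem_lowerCell (hπ : π ∈ (⊥ : Ideal R).jacobson) {m : ℕ} (hm : 1 ≤ m)
    {g : GL (Fin 2) R} (hg : g ∈ lowerCell π m) : IsUnit (g.val 0 0) ∧ IsUnit (g.val 1 1) :=
  GL2.isUnit_diag_of_mem_jacobson hπ (pow_one π ▸ pow_dvd_of_mem_powUnits hm hg)

section Mul

variable (hπ : π ∈ (⊥ : Ideal R).jacobson) {ℓ j : ℕ} (hℓj : ℓ < j)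
include hπ hℓj

lemma mul_mem_lowerCell_of_lt {y z : GL (Fin 2) R} (hy : y ∈ lowerCell π ℓ)
    (hz : z ∈ lowerCell π j) : y * z ∈ lowerCell π ℓ := by
  have hz00 := (GL2.isUnit_diag_of_mem_lowerCell hπ (Nat.one_le_of_lt hℓj) hz).1
  simp only [lowerCell, Set.mem_ofPred_eq, GL2.mul_apply]
  rw [mul_comm]
  exact add_mem_powUnits hπ (mul_mem_powUnits hz00 hy)
    ((pow_dvd_of_mem_powUnits hℓj hz).mul_left _)

lemma mul_mem_lowerCell_of_gt {y z : GL (Fin 2) R} (hz : z ∈ lowerCell π j)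
    (hy : y ∈ lowerCell π ℓ) : z * y ∈ lowerCell π ℓ := by
  have hz11 := (GL2.isUnit_diag_of_mem_lowerCell hπ (Nat.one_le_of_lt hℓj) hz).2
  simp only [lowerCell, Set.mem_ofPred_eq, GL2.mul_apply]
  rw [add_comm]
  exact add_mem_powUnits hπ (mul_mem_powUnits hz11 hy)
    ((pow_dvd_of_mem_powUnits hℓj hz).mul_right _)

end Mul

lemma mem_lowerCell_iff (hπ : π ∈ (⊥ : Ideal R).jacobson) {m : ℕ} (hm : 1 ≤ m)
    {g : GL (Fin 2) R} :
    g ∈ lowerCell π m ↔ ∃ b b', inB b ∧ inB b' ∧ g = b * yG (π ^ m) * b' := by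
  constructor
  · intro hg
    obtain ⟨u, hu⟩ := id hg
    obtain ⟨ha, -⟩ := GL2.isUnit_diag_of_mem_lowerCell hπ hm hg
    set a := ha.unit
    set D := (Matrix.isUnits_det_units g).unit
    have hai : (↑a⁻¹ : R) * g.val 0 0 = 1 := ha.val_inv_mul
    have hD : (D : R) = g.val 0 0 * g.val 1 1 - g.val 0 1 * g.val 1 0 := by
      rw [IsUnit.unit_spec, Matrix.det_fin_two]
    refine ⟨Matrix.GeneralLinearGroup.mk'' !![1, 0; 0, ↑(u * a⁻¹)]
        (by simp [Matrix.det_fin_two_of]),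
      Matrix.GeneralLinearGroup.mk'' !![g.val 0 0, g.val 0 1; 0, ↑(D * u⁻¹)]
        (by simp [Matrix.det_fin_two_of, ha]),
      by simp [inB], by simp [inB], ?_⟩
    rw [Matrix.GeneralLinearGroup.ext_iff]
    intro i k
    fin_cases i <;> fin_cases k <;>
      simp only [Fin.zero_eta, Fin.mk_one, Fin.isValue, GL2.mul_apply,
        Matrix.GeneralLinearGroup.val_mk'', yG_val, Units.val_mul,
        Matrix.of_apply, Matrix.cons_val', Matrix.cons_val_zero, Matrix.cons_val_one,
        Matrix.cons_val_fin_one]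
    · ring
    · ring
    · linear_combination (-1 : R) * hu - π ^ m * u * hai
    · linear_combination (-g.val 1 1) * hai - ↑a⁻¹ * hD - ↑a⁻¹ * g.val 0 1 * hu
        - ↑a⁻¹ * ↑D * u.mul_inv
  · rintro ⟨b, b', hb, hb', rfl⟩
    refine ⟨((GL2.isUnit_diag_of_inB hπ hb).2.mul (GL2.isUnit_diag_of_inB hπ hb').1).unit, ?_⟩
    simp only [GL2.mul_apply, yG_val, IsUnit.unit_spec, Matrix.of_apply, Matrix.cons_val',
      Matrix.cons_val_zero, Matrix.cons_val_one, Matrix.cons_val_fin_one,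
      show b.val 1 0 = 0 from hb, show b'.val 1 0 = 0 from hb']
    ring

lemma card_lowerCell (hπ : π ∈ (⊥ : Ideal R).jacobson) {j : ℕ} (hj : 1 ≤ j) :
    Nat.card (lowerCell π j) = Nat.card (powUnits π j) * cardB R := by
  have h00 (t : R) (g : GL (Fin 2) R) : (yG t * g).val 0 0 = g.val 0 0 := by
    simp [GL2.mul_apply, yG]
  have h10 (t : R) (g : GL (Fin 2) R) : (yG t * g).val 1 0 = t * g.val 0 0 + g.val 1 0 := by
    simp [GL2.mul_apply, yG]
  rw [cardB, ← Nat.card_prod]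
  refine (Nat.card_eq_of_bijective (fun tb : powUnits π j × {b : GL (Fin 2) R // inB b} =>
    (⟨yG tb.1.1 * tb.2.1, ?_⟩ : lowerCell π j)) ⟨?_, ?_⟩).symm
  · show _ ∈ powUnits π j
    rw [h10, show tb.2.1.val 1 0 = 0 from tb.2.2, add_zero, mul_comm]
    exact mul_mem_powUnits (GL2.isUnit_diag_of_inB hπ tb.2.2).1 tb.1.2
  · rintro ⟨⟨t, _⟩, ⟨b, hb⟩⟩ ⟨⟨t', _⟩, ⟨b', hb'⟩⟩ hbij
    have h : yG t * b = yG t' * b' := congrArg Subtype.val hbij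
    have hb00 := congrArg (fun g : GL (Fin 2) R => g.val 0 0) h
    have hb10 := congrArg (fun g : GL (Fin 2) R => g.val 1 0) h
    simp only [h00, h10] at hb00 hb10
    rw [show b.val 1 0 = 0 from hb, show b'.val 1 0 = 0 from hb', add_zero, add_zero, ← hb00,
      (GL2.isUnit_diag_of_inB hπ hb).1.mul_left_inj] at hb10
    subst hb10
    simp [mul_left_cancel h]
  · rintro ⟨g, hg⟩
    have ha := (GL2.isUnit_diag_of_mem_lowerCell hπ hj hg).1
    have ht : g.val 1 0 * Ring.inverse (g.val 0 0) ∈ powUnits π j := by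
      rw [mul_comm]
      exact mul_mem_powUnits ha.ringInverse hg
    set t := g.val 1 0 * Ring.inverse (g.val 0 0)
    have hb : inB (yG (-t) * g) := by
      rw [inB, h10, neg_mul, mul_assoc, Ring.inverse_mul_cancel _ ha]
      ring
    refine ⟨(⟨t, ht⟩, ⟨yG (-t) * g, hb⟩), ?_⟩
    simp [← mul_assoc, yG_mul_yG, yG_zero]

end Cells

section Character

variable {R : Type*} [CommRing R] {π : R} {χ : Rˣ →* ℂˣ}

lemma chiB_of_isUnit {g : GL (Fin 2) R} (hg : IsUnit (g.val 1 1)) : chiB χ g = χ hg.unit :=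
  dif_pos hg

lemma chiB_yG (t : R) : chiB χ (yG t) = 1 := by
  simp [chiB, yG]

variable (hπ : π ∈ (⊥ : Ideal R).jacobson) {r : ℕ} (hr : 1 ≤ r)
  (hχ : ∀ u : Rˣ, π ^ r ∣ (u : R) - 1 → χ u = 1)
include hπ hr hχ

lemma chiB_mul {g h : GL (Fin 2) R} (hg : π ^ r ∣ g.val 1 0) (hh : π ∣ h.val 1 0) :
    chiB χ (g * h) = chiB χ g * chiB χ h := by
  have hg' : π ∣ g.val 1 0 := (dvd_pow_self π (by omega)).trans hg
  have hgh : π ∣ (g * h).val 1 0 := by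
    rw [GL2.mul_apply]
    exact dvd_add (hg'.mul_right _) (hh.mul_left _)
  obtain ⟨-, hg11⟩ := GL2.isUnit_diag_of_mem_jacobson hπ hg'
  obtain ⟨-, hh11⟩ := GL2.isUnit_diag_of_mem_jacobson hπ hh
  obtain ⟨-, hgh11⟩ := GL2.isUnit_diag_of_mem_jacobson hπ hgh
  rw [chiB_of_isUnit hgh11, chiB_of_isUnit hg11, chiB_of_isUnit hh11, ← Units.val_mul,
    ← map_mul, χ.eq_of_pow_dvd_sub hχ]
  -- `(g * h)₁₁ - g₁₁ * h₁₁ = g₁₀ * h₀₁`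
  simpa [GL2.mul_apply] using hg.mul_right (h.val 0 1)

variable [Fintype R] [DecidableEq R]

lemma conv_indicator_chiB {a b : ℕ} (ha : r ≤ a) (hb : r ≤ b) (x : GL (Fin 2) R) :
    conv ((lowerCell π a).indicator (chiB χ)) ((lowerCell π b).indicator (chiB χ)) x =
      (cardB R : ℂ)⁻¹ *
        (Nat.card {y // y ∈ lowerCell π a ∧ y⁻¹ * x ∈ lowerCell π b} * chiB χ x) := by
  classical
  have hterm (y : GL (Fin 2) R) :
      (lowerCell π a).indicator (chiB χ) y * (lowerCell π b).indicator (chiB χ) (y⁻¹ * x) =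
        (if y ∈ lowerCell π a ∧ y⁻¹ * x ∈ lowerCell π b then 1 else 0) * chiB χ x := by
    by_cases hy : y ∈ lowerCell π a
    · by_cases hz : y⁻¹ * x ∈ lowerCell π b
      · rw [Set.indicator_of_mem hy, Set.indicator_of_mem hz, if_pos ⟨hy, hz⟩, one_mul,
          ← chiB_mul hπ hr hχ (pow_dvd_of_mem_powUnits ha hy)
            (pow_one π ▸ pow_dvd_of_mem_powUnits (hr.trans hb) hz), mul_inv_cancel_left]
      · simp [hz]
    · simp [hy]
  rw [conv, Finset.sum_congr rfl fun y _ => hterm y, ← Finset.sum_mul, Finset.sum_boole,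
    Nat.card_eq_fintype_card, Fintype.card_subtype]

end Character

section Convolution

variable {R : Type*} [CommRing R] {π : R} (hπ : π ∈ (⊥ : Ideal R).jacobson)

section Count

variable {ℓ j : ℕ} (hℓj : ℓ < j)
include hπ hℓj

lemma card_mem_lowerCell_inv_mul_mem_of_lt (x : GL (Fin 2) R) :
    Nat.card {y // y ∈ lowerCell π ℓ ∧ y⁻¹ * x ∈ lowerCell π j} =
      (lowerCell π ℓ).indicator (fun _ => Nat.card (lowerCell π j)) x := by
  by_cases hx : x ∈ lowerCell π ℓ
  · rw [Set.indicator_of_mem hx]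
    refine Nat.card_congr (Equiv.subtypeEquiv ((Equiv.inv _).trans (Equiv.mulRight x)) fun y => ?_)
    refine ⟨And.right, fun hz => ⟨?_, hz⟩⟩
    simpa using mul_mem_lowerCell_of_lt hπ hℓj hx (inv_mem_lowerCell hz)
  · rw [Set.indicator_of_notMem hx]
    refine Nat.card_eq_zero.mpr (.inl ⟨fun ⟨y, hy, hz⟩ => hx ?_⟩)
    simpa using mul_mem_lowerCell_of_lt hπ hℓj hy hz

lemma card_mem_lowerCell_inv_mul_mem_of_gt (x : GL (Fin 2) R) :
    Nat.card {y // y ∈ lowerCell π j ∧ y⁻¹ * x ∈ lowerCell π ℓ} =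
      (lowerCell π ℓ).indicator (fun _ => Nat.card (lowerCell π j)) x := by
  by_cases hx : x ∈ lowerCell π ℓ
  · rw [Set.indicator_of_mem hx]
    exact Nat.card_congr <| Equiv.subtypeEquivRight fun _ =>
      ⟨And.left, fun hy => ⟨hy, mul_mem_lowerCell_of_gt hπ hℓj (inv_mem_lowerCell hy) hx⟩⟩
  · rw [Set.indicator_of_notMem hx]
    refine Nat.card_eq_zero.mpr (.inl ⟨fun ⟨y, hy, hz⟩ => hx ?_⟩)
    simpa using mul_mem_lowerCell_of_gt hπ hℓj hy hz

end Count

lemma cardB_ne_zero [Finite R] : cardB R ≠ 0 :=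
  have : Nonempty {g : GL (Fin 2) R // inB g} := ⟨⟨1, by simp [inB]⟩⟩
  Nat.card_pos.ne'

variable [Fintype R] [DecidableEq R] {χ : Rˣ →* ℂˣ} {r : ℕ} (hr : 1 ≤ r)
  (hχ : ∀ u : Rˣ, π ^ r ∣ (u : R) - 1 → χ u = 1) {ℓ j : ℕ} (hrℓ : r ≤ ℓ) (hℓj : ℓ < j)
include hπ hr hχ hrℓ hℓj

lemma conv_indicator_chiB_of_lt :
    conv ((lowerCell π ℓ).indicator (chiB χ)) ((lowerCell π j).indicator (chiB χ)) =
      (Nat.card (powUnits π j) : ℂ) • (lowerCell π ℓ).indicator (chiB χ) := by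
  classical
  funext x
  rw [conv_indicator_chiB hπ hr hχ hrℓ (hrℓ.trans hℓj.le),
    card_mem_lowerCell_inv_mul_mem_of_lt hπ hℓj, card_lowerCell hπ (by omega), Pi.smul_apply,
    smul_eq_mul, Set.indicator_apply, Set.indicator_apply]
  have := cardB_ne_zero (R := R)
  split_ifs <;> field_simp <;> push_cast <;> ring

lemma conv_indicator_chiB_of_gt :
    conv ((lowerCell π j).indicator (chiB χ)) ((lowerCell π ℓ).indicator (chiB χ)) =
      (Nat.card (powUnits π j) : ℂ) • (lowerCell π ℓ).indicator (chiB χ) := by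
  classical
  funext x
  rw [conv_indicator_chiB hπ hr hχ (hrℓ.trans hℓj.le) hrℓ,
    card_mem_lowerCell_inv_mul_mem_of_gt hπ hℓj, card_lowerCell hπ (by omega), Pi.smul_apply,
    smul_eq_mul, Set.indicator_apply, Set.indicator_apply]
  have := cardB_ne_zero (R := R)
  split_ifs <;> field_simp <;> push_cast <;> ring

end Convolution

section ZModPrimePow

variable {p n : ℕ}

lemma natCast_mem_jacobson_bot : (p : ZMod (p ^ n)) ∈ (⊥ : Ideal (ZMod (p ^ n))).jacobson :=
  Ideal.mem_jacobson_bot.mpr fun y => ((Commute.all _ y).isNilpotent_mul_right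
    ⟨n, by exact_mod_cast ZMod.natCast_self (p ^ n)⟩).isUnit_add_one

lemma isV.eq_indicator {r m : ℕ} {χ : (ZMod (p ^ n))ˣ →* ℂˣ} (hr : 1 ≤ r) (hrm : r ≤ m)
    (hχ : ∀ u : (ZMod (p ^ n))ˣ, (p : ZMod (p ^ n)) ^ r ∣ (u : ZMod (p ^ n)) - 1 → χ u = 1)
    {V : GL (Fin 2) (ZMod (p ^ n)) → ℂ} (hV : isV p n χ m V) :
    V = (lowerCell (p : ZMod (p ^ n)) m).indicator (chiB χ) := by
  have hm : 1 ≤ m := hr.trans hrm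
  have hπ := natCast_mem_jacobson_bot (p := p) (n := n)
  funext g
  by_cases hg : g ∈ lowerCell (p : ZMod (p ^ n)) m
  · obtain ⟨b, b', hb, hb', rfl⟩ := (mem_lowerCell_iff hπ hm).1 hg
    have hby : b * yG ((p : ZMod (p ^ n)) ^ m) ∈ lowerCell (p : ZMod (p ^ n)) m :=
      (mem_lowerCell_iff hπ hm).2 ⟨b, 1, hb, by simp [inB], (mul_one _).symm⟩
    rw [Set.indicator_of_mem hg, hV.1 b _ b' hb hb', hV.2.2, mul_one,
      chiB_mul hπ hr hχ (pow_dvd_of_mem_powUnits hrm hby) (hb' ▸ dvd_zero _),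
      chiB_mul hπ hr hχ (hb ▸ dvd_zero _) (by simp [yG, dvd_pow_self _ (by omega : m ≠ 0)]),
      chiB_yG, mul_one]
  · rw [Set.indicator_of_notMem hg]
    exact hV.2.1 g fun hdec => hg ((mem_lowerCell_iff hπ hm).2 hdec)

variable [Fact p.Prime] {j : ℕ}

lemma natCast_pow_mul_val_cast (hj : j ≤ n) (s : ZMod (p ^ n)) :
    (p : ZMod (p ^ n)) ^ j * ((ZMod.cast s : ZMod (p ^ (n - j))).val : ZMod (p ^ n)) =
      p ^ j * s := by
  rw [ZMod.cast_eq_val, ZMod.val_natCast]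
  conv_rhs => rw [← ZMod.natCast_zmod_val s, ← Nat.mod_add_div s.val (p ^ (n - j))]
  push_cast
  rw [mul_add, ← mul_assoc, ← pow_add, Nat.add_sub_cancel' hj]
  simp [show (p : ZMod (p ^ n)) ^ n = 0 by exact_mod_cast ZMod.natCast_self (p ^ n)]

lemma natCard_powUnits (hj : j < n) :
    Nat.card (powUnits (p : ZMod (p ^ n)) j) = p ^ (n - j - 1) * (p - 1) := by
  have hp : p.Prime := Fact.out
  set ι : (ZMod (p ^ (n - j)))ˣ → ZMod (p ^ n) :=
    fun v => p ^ j * ((v : ZMod (p ^ (n - j))).val : ZMod (p ^ n))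
  have hrange : powUnits (p : ZMod (p ^ n)) j = Set.range ι := by
    rw [powUnits, ← (ZMod.unitsMap_surjective (pow_dvd_pow p (Nat.sub_le n j))).range_comp]
    congr 1
    funext u
    simp only [Function.comp_apply, ι, ZMod.unitsMap_val]
    exact (natCast_pow_mul_val_cast hj.le (u : ZMod (p ^ n))).symm
  have hinj : Function.Injective ι := by
    intro v w h
    have h' : ((p ^ j * (v : ZMod (p ^ (n - j))).val : ℕ) : ZMod (p ^ n)) =
        ((p ^ j * (w : ZMod (p ^ (n - j))).val : ℕ) : ZMod (p ^ n)) := by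
      push_cast
      exact h
    have hpn : p ^ n = p ^ j * p ^ (n - j) := by rw [← pow_add, Nat.add_sub_cancel' hj.le]
    rw [ZMod.natCast_eq_natCast_iff, hpn] at h'
    exact Units.ext <| ZMod.val_injective _ <|
      (Nat.ModEq.mul_left_cancel' (pow_ne_zero _ hp.ne_zero) h').eq_of_lt_of_lt
        (ZMod.val_lt _) (ZMod.val_lt _)
  rw [hrange, Nat.card_range_of_injective hinj, Nat.card_eq_fintype_card,
    ZMod.card_units_eq_totient, Nat.totient_prime_pow hp (by omega)]

end ZModPrimePow

theorem stmt6_general (p n r : ℕ) [Fact p.Prime] (hr : 1 ≤ r)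
    (χ : (ZMod (p ^ n))ˣ →* ℂˣ) (hχ : hasConductor p n r χ)
    (V : ℕ → GL (Fin 2) (ZMod (p ^ n)) → ℂ)
    (hV : ∀ j, r ≤ j → j ≤ n → isV p n χ j (V j))
    (ℓ j : ℕ) (hℓ : r ≤ ℓ) (hℓj : ℓ < j) (hj : j ≤ n - 1) :
    conv (V ℓ) (V j) = conv (V j) (V ℓ) ∧
    ∀ x, conv (V ℓ) (V j) x = (p : ℂ) ^ (n - j - 1) * ((p : ℂ) - 1) * V ℓ x := by
  have hπ := natCast_mem_jacobson_bot (p := p) (n := n)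
  rw [(hV ℓ hℓ (by omega)).eq_indicator hr hℓ hχ.1,
    (hV j (by omega) (by omega)).eq_indicator hr (by omega) hχ.1,
    conv_indicator_chiB_of_lt hπ hr hχ.1 hℓ hℓj, conv_indicator_chiB_of_gt hπ hr hχ.1 hℓ hℓj,
    natCard_powUnits (by omega)]
  refine ⟨rfl, fun x => ?_⟩
  rw [Pi.smul_apply, smul_eq_mul, Nat.cast_mul, Nat.cast_pow,
    Nat.cast_sub (Fact.out : p.Prime).one_le, Nat.cast_one]

/-- For `r ≤ ℓ < j ≤ n−1`: `V_ℓ * V_j = V_j * V_ℓ = p^{n−j−1}(p−1) V_ℓ` in `H(χ)`. -/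
theorem stmt6 (p n r : ℕ) [Fact p.Prime] (hn : 1 ≤ n) (hr : 1 ≤ r) (hrn : r ≤ n)
    (χ : (ZMod (p ^ n))ˣ →* ℂˣ) (hχ : hasConductor p n r χ)
    (V : ℕ → GL (Fin 2) (ZMod (p ^ n)) → ℂ)
    (hV : ∀ j, r ≤ j → j ≤ n → isV p n χ j (V j))
    (ℓ j : ℕ) (hℓ : r ≤ ℓ) (hℓj : ℓ < j) (hj : j ≤ n - 1) :
    conv (V ℓ) (V j) = conv (V j) (V ℓ) ∧
    ∀ x, conv (V ℓ) (V j) x = (p : ℂ) ^ (n - j - 1) * ((p : ℂ) - 1) * V ℓ x :=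
  stmt6_general p n r hr χ hχ V hV ℓ j hℓ hℓj hj

end
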